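/- arXiv:1501.04519 — 2 statements merged into one kernel-verified Lean document; each statement's English description precedes it below -/
import Mathlib

section
/- Let ℓ be a prime, m, k nonnegative integers with k ≥ m, R = ℤ/ℓ^k, Δ a fundamental discriminant of an imaginary quadratic field, and A ∈ M₂(R) the matrix with rows (0, Δ(1-Δ)/4), (1, Δ). Let φ ∈ M₂(R) have the form with columns (0,0) and (t,u) for t,u ∈ R. Then ℓ^m(Aφ - φA) ∈ R[A] if and only if ℓ^{m+⌊ord_ℓ(Δ)/2⌋}·t = 0 and ℓ^{m+⌈ord_ℓ(Δ)/2⌉}·u = 0 in R. -/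
/-!
Write `A = !![0, C; 1, D]` with `D = Δ`, `C = Δ(1 - Δ)/4`. Since `Aφ - φA = !![-t, Cu - Dt; -u, t]`
and `a + bA = !![a, bC; b, a + bD]`, the condition is the linear system
`ℓ^m (2t + Du) = 0`, `ℓ^m (Dt - 2Cu) = 0`, whose determinant is `-(4C + D²) = -D`.
If `ℓ ∤ Δ` then `D` is a unit and the system says `ℓ^m t = ℓ^m u = 0`. If `ℓ` is odd then `2` is a
unit, the system says `ℓ^m t = ℓ^m D u = 0`, and `ord_ℓ Δ ≤ 1` by squarefreeness. If `ℓ = 2 ∣ Δ`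
then `Δ = 4d` with `ord₂ d ∈ {0, 1}`, and the system says `2^(m+1) t = 2^(m+1) d u = 0`.
-/

namespace Matrix

variable {R : Type*} [CommRing R] (c C D t u : R)

theorem smul_commutator_mem_span_one_iff :
    c • (!![0, C; 1, D] * !![0, t; 0, u] - !![0, t; 0, u] * !![0, C; 1, D]) ∈
        Submodule.span R {1, !![0, C; 1, D]} ↔
      c * (2 * t + D * u) = 0 ∧ c * (D * t - 2 * C * u) = 0 := by
  rw [Submodule.mem_span_pair]
  simp only [one_fin_two, smul_of, smul_cons, smul_eq_mul, mul_one, mul_zero, smul_empty,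
    of_add_of, add_cons, head_cons, add_zero, tail_cons, zero_add, empty_add_empty, cons_mul,
    Nat.succ_eq_add_one, Nat.reduceAdd, vecMul_cons, zero_smul, empty_vecMul, one_smul,
    empty_mul, Equiv.symm_apply_apply, of_sub_of, sub_cons, zero_sub, sub_self, zero_empty,
    mul_neg, EmbeddingLike.apply_eq_iff_eq, vecCons_inj, and_true, ↓existsAndEq, neg_mul,
    true_and]
  constructor
  · rintro ⟨h01, h11⟩
    exact ⟨by linear_combination -h11, by linear_combination h01⟩
  · rintro ⟨h1, h2⟩
    exact ⟨by linear_combination h2, by linear_combination -h1⟩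

variable {c C D t u}

theorem smul_commutator_mem_span_one_iff_of_isUnit (hC : 4 * C = D - D ^ 2) (hD : IsUnit D) :
    c • (!![0, C; 1, D] * !![0, t; 0, u] - !![0, t; 0, u] * !![0, C; 1, D]) ∈
        Submodule.span R {1, !![0, C; 1, D]} ↔ c * t = 0 ∧ c * u = 0 := by
  rw [smul_commutator_mem_span_one_iff]
  constructor
  · rintro ⟨h1, h2⟩
    have hDt : D * (c * t) = 0 := by linear_combination 2 * C * h1 + D * h2 - c * t * hC
    have hDu : D * (c * u) = 0 := by linear_combination D * h1 - 2 * h2 - c * u * hC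
    exact ⟨hD.mul_right_eq_zero.1 hDt, hD.mul_right_eq_zero.1 hDu⟩
  · rintro ⟨ht, hu⟩
    exact ⟨by linear_combination 2 * ht + D * hu, by linear_combination D * ht - 2 * C * hu⟩

theorem smul_commutator_mem_span_one_iff_of_isUnit_two (hC : 4 * C = D - D ^ 2)
    (h2 : IsUnit (2 : R)) :
    c • (!![0, C; 1, D] * !![0, t; 0, u] - !![0, t; 0, u] * !![0, C; 1, D]) ∈
        Submodule.span R {1, !![0, C; 1, D]} ↔ c * t = 0 ∧ c * D * u = 0 := by
  rw [smul_commutator_mem_span_one_iff]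
  constructor
  · rintro ⟨h1, h2'⟩
    have hu : c * D * u = 0 := by linear_combination D * h1 - 2 * h2' - c * u * hC
    have ht : 2 * (c * t) = 0 := by linear_combination h1 - hu
    exact ⟨h2.mul_right_eq_zero.1 ht, hu⟩
  · rintro ⟨ht, hu⟩
    refine ⟨by linear_combination 2 * ht + hu, h2.mul_right_eq_zero.1 ?_⟩
    linear_combination 2 * D * ht - c * u * hC - (1 - D) * hu

theorem smul_commutator_mem_span_one_iff_of_eq_four_mul {d : R} (hD : D = 4 * d)
    (hC : C = d - 4 * d ^ 2) :
    c • (!![0, C; 1, D] * !![0, t; 0, u] - !![0, t; 0, u] * !![0, C; 1, D]) ∈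
        Submodule.span R {1, !![0, C; 1, D]} ↔ 2 * c * t = 0 ∧ 2 * c * d * u = 0 := by
  rw [smul_commutator_mem_span_one_iff]
  subst hD hC
  constructor
  · rintro ⟨h1, h2⟩
    have hu : 2 * c * d * u = 0 := by linear_combination 2 * d * h1 - h2
    exact ⟨by linear_combination h1 - 2 * hu, hu⟩
  · rintro ⟨ht, hu⟩
    exact ⟨by linear_combination ht + 2 * hu, by linear_combination 2 * d * ht - (1 - 4 * d) * hu⟩

end Matrix

theorem exists_eq_pow_padicValInt_mul {ℓ : ℕ} (hℓ : ℓ ≠ 1) {a : ℤ} (ha : a ≠ 0) :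
    ∃ b : ℤ, ¬ (ℓ : ℤ) ∣ b ∧ a = ℓ ^ padicValInt ℓ a * b := by
  obtain ⟨b, hb⟩ := padicValInt_dvd (p := ℓ) a
  refine ⟨b, fun hℓb => ?_, hb⟩
  have hdvd : (ℓ : ℤ) ^ (padicValInt ℓ a + 1) ∣ a :=
    calc (ℓ : ℤ) ^ (padicValInt ℓ a + 1) = ℓ ^ padicValInt ℓ a * ℓ := pow_succ _ _
      _ ∣ ℓ ^ padicValInt ℓ a * b := mul_dvd_mul_left _ hℓb
      _ = a := hb.symm
  rcases (padicValInt_dvd_iff_of_ne_one hℓ _ a).1 hdvd with h | h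
  exacts [ha h, by omega]

theorem ZMod.isUnit_intCast_of_not_dvd {ℓ : ℕ} (hℓ : ℓ.Prime) (k : ℕ) {a : ℤ}
    (ha : ¬ (ℓ : ℤ) ∣ a) : IsUnit (a : ZMod (ℓ ^ k)) := by
  rw [ZMod.coe_int_isUnit_iff_isCoprime, Nat.cast_pow]
  exact (((Nat.prime_iff_prime_int.1 hℓ).coprime_iff_not_dvd).2 ha).pow_left

theorem Nat.Prime.not_intCast_dvd_two {ℓ : ℕ} (hℓ : ℓ.Prime) (hℓ2 : ℓ ≠ 2) : ¬ (ℓ : ℤ) ∣ 2 :=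
  fun h => hℓ2 <| (Nat.prime_dvd_prime_iff_eq hℓ Nat.prime_two).1 (by exact_mod_cast h)

theorem Int.mul_one_sub_ediv_four_of_eq_four_mul {a d : ℤ} (h : a = 4 * d) :
    a * (1 - a) / 4 = d - 4 * d ^ 2 := by
  rw [h, show 4 * d * (1 - 4 * d) = 4 * (d - 4 * d ^ 2) by ring,
    Int.mul_ediv_cancel_left _ four_ne_zero]

def IsFundamentalDiscriminant (Δ : ℤ) : Prop :=
  (Δ % 4 = 1 ∧ Squarefree Δ) ∨ (∃ d : ℤ, Δ = 4 * d ∧ (d % 4 = 2 ∨ d % 4 = 3) ∧ Squarefree d)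

namespace IsFundamentalDiscriminant

variable {Δ : ℤ}

theorem four_dvd_mul_one_sub (hΔ : IsFundamentalDiscriminant Δ) : 4 ∣ Δ * (1 - Δ) := by
  rcases hΔ with ⟨h1, -⟩ | ⟨d, rfl, -, -⟩
  · exact dvd_mul_of_dvd_right (by omega) Δ
  · exact dvd_mul_of_dvd_left (dvd_mul_right 4 d) _

theorem four_mul_intCast_ediv_four (hΔ : IsFundamentalDiscriminant Δ) {R : Type*} [CommRing R] :
    4 * ((Δ * (1 - Δ) / 4 : ℤ) : R) = Δ - Δ ^ 2 := by
  have h := congrArg (Int.cast (R := R)) (Int.mul_ediv_cancel' hΔ.four_dvd_mul_one_sub)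
  push_cast at h
  linear_combination h

theorem padicValInt_le_one (hΔ : IsFundamentalDiscriminant Δ) {ℓ : ℕ} (hℓ : ℓ.Prime)
    (hℓ2 : ℓ ≠ 2) : padicValInt ℓ Δ ≤ 1 := by
  by_contra! hv
  have hsq : (ℓ : ℤ) * ℓ ∣ Δ := by
    rw [← sq, padicValInt_dvd_iff_of_ne_one hℓ.ne_one]
    exact Or.inr hv
  have hℓ' : ¬ IsUnit (ℓ : ℤ) := (Nat.prime_iff_prime_int.1 hℓ).not_isUnit
  rcases hΔ with ⟨-, hsf⟩ | ⟨d, rfl, -, hsf⟩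
  · exact hℓ' (hsf _ hsq)
  · have hcop : IsCoprime ((ℓ : ℤ) * ℓ) 4 := by
      have h : IsCoprime (ℓ : ℤ) 2 :=
        (Nat.prime_iff_prime_int.1 hℓ).coprime_iff_not_dvd.2 (hℓ.not_intCast_dvd_two hℓ2)
      have h4 : IsCoprime (ℓ : ℤ) 4 := by simpa using h.mul_right h
      exact h4.mul_left h4
    exact hℓ' (hsf _ (hcop.dvd_of_dvd_mul_left hsq))

theorem padicValInt_two_eq_two_or_eq_three (hΔ : IsFundamentalDiscriminant Δ) (h0 : Δ ≠ 0)
    (hv : 0 < padicValInt 2 Δ) :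
    padicValInt 2 Δ = 2 ∨ padicValInt 2 Δ = 3 := by
  have hdvd (n : ℕ) : (2 : ℤ) ^ n ∣ Δ ↔ n ≤ padicValInt 2 Δ := by
    simpa [h0] using padicValInt_dvd_iff_of_ne_one (p := 2) (by norm_num) n Δ
  have h16 : ¬ (2 : ℤ) ^ 4 ∣ Δ := by
    rcases hΔ with ⟨h1, -⟩ | ⟨d, rfl, hd, -⟩ <;> omega
  have h4 : (2 : ℤ) ^ 2 ∣ Δ := by
    rcases hΔ with ⟨h1, -⟩ | ⟨d, rfl, -, -⟩
    · have := (hdvd 1).2 hv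
      omega
    · exact ⟨d, by ring⟩
  rw [hdvd] at h16 h4
  omega

end IsFundamentalDiscriminant

theorem stmt5_general (ℓ : ℕ) (hℓ : ℓ.Prime) (m k : ℕ) (Δ : ℤ) (hneg : Δ < 0)
    (hfund : (Δ % 4 = 1 ∧ Squarefree Δ) ∨
      (∃ d : ℤ, Δ = 4 * d ∧ (d % 4 = 2 ∨ d % 4 = 3) ∧ Squarefree d))
    (v : ℕ) (hv : v = padicValInt ℓ Δ)
    (A : Matrix (Fin 2) (Fin 2) (ZMod (ℓ ^ k)))
    (hA : A = !![0, ((Δ * (1 - Δ) / 4 : ℤ) : ZMod (ℓ ^ k)); 1, ((Δ : ℤ) : ZMod (ℓ ^ k))])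
    (t u : ZMod (ℓ ^ k))
    (φ : Matrix (Fin 2) (Fin 2) (ZMod (ℓ ^ k)))
    (hφ : φ = !![0, t; 0, u]) :
    ((ℓ : ZMod (ℓ ^ k)) ^ m • (A * φ - φ * A) ∈
        Submodule.span (ZMod (ℓ ^ k)) {(1 : Matrix (Fin 2) (Fin 2) (ZMod (ℓ ^ k))), A})
      ↔ ((ℓ : ZMod (ℓ ^ k)) ^ (m + v / 2) * t = 0 ∧
         (ℓ : ZMod (ℓ ^ k)) ^ (m + (v + 1) / 2) * u = 0) := by
  subst hA hφ
  have hΔ : IsFundamentalDiscriminant Δ := hfund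
  obtain ⟨W, hℓW, hΔW⟩ := exists_eq_pow_padicValInt_mul hℓ.ne_one hneg.ne
  rw [← hv] at hΔW
  have hW : IsUnit (W : ZMod (ℓ ^ k)) := ZMod.isUnit_intCast_of_not_dvd hℓ k hℓW
  have hC := hΔ.four_mul_intCast_ediv_four (R := ZMod (ℓ ^ k))
  rcases Nat.eq_zero_or_pos v with rfl | hv0
  · obtain rfl : Δ = W := by simpa using hΔW
    rw [Matrix.smul_commutator_mem_span_one_iff_of_isUnit hC hW]
    simp
  rcases eq_or_ne ℓ 2 with rfl | hℓ2
  · have hv23 : v = 2 ∨ v = 3 := hv ▸ hΔ.padicValInt_two_eq_two_or_eq_three hneg.ne (hv ▸ hv0)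
    have hd : Δ = 4 * (2 ^ (v - 2) * W) := by
      rw [hΔW]
      rcases hv23 with rfl | rfl <;> ring
    have hdC := Int.mul_one_sub_ediv_four_of_eq_four_mul hd
    rw [Matrix.smul_commutator_mem_span_one_iff_of_eq_four_mul
        (d := ((2 ^ (v - 2) * W : ℤ) : ZMod (2 ^ k))) (by rw [hd]; push_cast; ring)
        (by rw [hdC]; push_cast; ring),
      show m + v / 2 = m + 1 by omega, show m + (v + 1) / 2 = m + 1 + (v - 2) by omega]
    push_cast
    rw [show (2 : ZMod (2 ^ k)) * 2 ^ m * (2 ^ (v - 2) * W) * u = W * (2 ^ (m + 1 + (v - 2)) * u)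
        by ring, hW.mul_right_eq_zero, pow_succ, mul_comm _ (2 : ZMod (2 ^ k))]
  · obtain rfl : v = 1 := by have := hΔ.padicValInt_le_one hℓ hℓ2; omega
    have h2 : IsUnit (2 : ZMod (ℓ ^ k)) := by
      exact_mod_cast ZMod.isUnit_intCast_of_not_dvd hℓ k (hℓ.not_intCast_dvd_two hℓ2)
    rw [Matrix.smul_commutator_mem_span_one_iff_of_isUnit_two hC h2, hΔW,
      show m + 1 / 2 = m from rfl, show m + (1 + 1) / 2 = m + 1 from rfl]
    push_cast
    rw [show (ℓ : ZMod (ℓ ^ k)) ^ m * (ℓ ^ 1 * W) * u = W * (ℓ ^ (m + 1) * u) by ring,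
      hW.mul_right_eq_zero]

/-- The matrix computation at the heart of Theorem 2.8: for `A` the matrix of `α`
and `φ` with columns `(0,0)`, `(t,u)`, we have `ℓ^m(Aφ - φA) ∈ R[A]` iff
`ℓ^{m+⌊v/2⌋}·t = 0` and `ℓ^{m+⌈v/2⌉}·u = 0`, where `v = ord_ℓ(Δ)`. -/
theorem stmt5 (ℓ : ℕ) (hℓ : ℓ.Prime) (m k : ℕ) (hk : m ≤ k) (Δ : ℤ) (hneg : Δ < 0)
    (hfund : (Δ % 4 = 1 ∧ Squarefree Δ) ∨
      (∃ d : ℤ, Δ = 4 * d ∧ (d % 4 = 2 ∨ d % 4 = 3) ∧ Squarefree d))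
    (v : ℕ) (hv : v = padicValInt ℓ Δ)
    (A : Matrix (Fin 2) (Fin 2) (ZMod (ℓ ^ k)))
    (hA : A = !![0, ((Δ * (1 - Δ) / 4 : ℤ) : ZMod (ℓ ^ k)); 1, ((Δ : ℤ) : ZMod (ℓ ^ k))])
    (t u : ZMod (ℓ ^ k))
    (φ : Matrix (Fin 2) (Fin 2) (ZMod (ℓ ^ k)))
    (hφ : φ = !![0, t; 0, u]) :
    ((ℓ : ZMod (ℓ ^ k)) ^ m • (A * φ - φ * A) ∈
        Submodule.span (ZMod (ℓ ^ k)) {(1 : Matrix (Fin 2) (Fin 2) (ZMod (ℓ ^ k))), A})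
      ↔ ((ℓ : ZMod (ℓ ^ k)) ^ (m + v / 2) * t = 0 ∧
         (ℓ : ZMod (ℓ ^ k)) ^ (m + (v + 1) / 2) * u = 0) :=
  stmt5_general ℓ hℓ m k Δ hneg hfund v hv A hA t u φ hφ
end

section
/- Let K = ℚ(√-d) with 𝒪_K = ℤ[√-d] (so Δ_K = -4d). In M₂(ℤ/2^k), with √-d represented as a matrix S satisfying S² = -d·I, and τ an element with τ² = I and τS = -Sτ, an element (a + bS)τ lies in the subring R[S] = {xI + yS} of M₂(ℤ/2^k) if and only if 2^{k - ⌊ord_2(4d)/2⌋} divides a and 2^{k - ⌈ord_2(4d)/2⌉} divides b (as integers, where a,b ∈ ℤ). -/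
/-!
The subring `R[S]` is exactly the set of matrices `!![x, c * y; y, x]` (with `c = -d`), while
`(a + bS)τ = !![a, -(b * c); b, -a]`. So `(a + bS)τ ∈ R[S]` iff `2a = 0` and `2db = 0` in
`ℤ/2^k`, i.e. `2^(k - 1) ∣ a` and `2^(k - ord₂(2d)) ∣ b`. Since `4 ∤ d`, `ord₂ d ≤ 1`, so
`v = ord₂(4d) ∈ {2, 3}`, whence `⌊v/2⌋ = 1` and `⌈v/2⌉ = v - 1 = ord₂(2d)`.
-/

theorem pow_dvd_pow_mul_iff {M : Type*} [CommMonoidWithZero M] [IsCancelMulZero M] {x : M}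
    (hx : x ≠ 0) (k m : ℕ) (b : M) : x ^ k ∣ x ^ m * b ↔ x ^ (k - m) ∣ b := by
  rcases le_or_gt k m with hkm | hmk
  · rw [Nat.sub_eq_zero_of_le hkm, pow_zero]
    exact iff_of_true (dvd_mul_of_dvd_left (pow_dvd_pow x hkm) b) (one_dvd b)
  · obtain ⟨j, rfl⟩ := Nat.exists_eq_add_of_le hmk.le
    rw [pow_add, Nat.add_sub_cancel_left, mul_dvd_mul_iff_left (pow_ne_zero m hx)]

theorem Int.prime_pow_dvd_mul_iff {p : ℕ} [Fact p.Prime] {n : ℤ} (hn : n ≠ 0) (k : ℕ) (b : ℤ) :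
    (p : ℤ) ^ k ∣ n * b ↔ (p : ℤ) ^ (k - padicValInt p n) ∣ b := by
  set m := padicValInt p n
  obtain ⟨u, hnu⟩ := padicValInt_dvd (p := p) n
  have hp : Prime (p : ℤ) := Nat.prime_iff_prime_int.mp Fact.out
  have hu : ¬ (p : ℤ) ∣ u := by
    rintro ⟨w, rfl⟩
    have := (padicValInt_dvd_iff (p := p) (m + 1) n).mp ⟨w, by rw [hnu]; ring⟩
    omega
  have hcop : IsCoprime ((p : ℤ) ^ k) u := (hp.coprime_iff_not_dvd.mpr hu).pow_left
  rw [hnu, mul_assoc, mul_left_comm, ← pow_dvd_pow_mul_iff hp.ne_zero k m]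
  exact ⟨hcop.dvd_of_dvd_mul_left, (Dvd.dvd.mul_left · u)⟩

theorem ZMod.intCast_mul_eq_zero_iff {p : ℕ} [Fact p.Prime] {n : ℤ} (hn : n ≠ 0) (k : ℕ)
    (b : ℤ) : ((n * b : ℤ) : ZMod (p ^ k)) = 0 ↔ (p : ℤ) ^ (k - padicValInt p n) ∣ b := by
  rw [ZMod.intCast_zmod_eq_zero_iff_dvd, Nat.cast_pow, Int.prime_pow_dvd_mul_iff hn]

theorem padicValInt_two_mul {d : ℤ} (hd : d ≠ 0) :
    padicValInt 2 (2 * d) = padicValInt 2 d + 1 := by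
  rw [mul_comm]
  exact_mod_cast padicValInt_mul_eq_succ (p := 2) d hd

theorem padicValInt_two_le_one_of_not_four_dvd {d : ℤ} (h4 : ¬ 4 ∣ d) : padicValInt 2 d ≤ 1 := by
  have := (padicValInt_dvd_iff (p := 2) 2 d).not.mp (by norm_num [h4])
  omega

section CompanionMatrix

variable {R : Type*} [CommRing R]

theorem mem_span_one_companion_iff (c : R) (M : Matrix (Fin 2) (Fin 2) R) :
    M ∈ Submodule.span R {1, !![0, c; 1, 0]} ↔ M 0 0 = M 1 1 ∧ M 0 1 = c * M 1 0 := by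
  rw [Submodule.mem_span_pair]
  constructor
  · rintro ⟨x, y, rfl⟩
    simp [mul_comm]
  · rintro ⟨h0011, h0110⟩
    refine ⟨M 0 0, M 1 0, ?_⟩
    ext i j
    fin_cases i <;> fin_cases j <;> simp [h0011, h0110, mul_comm]

theorem smul_one_add_smul_companion_mul_eq (a b c : R) :
    (a • 1 + b • !![0, c; 1, 0]) * !![1, 0; 0, -1] = !![a, -(b * c); b, -a] := by
  ext i j
  fin_cases i <;> fin_cases j <;> simp [Matrix.mul_apply]

theorem smul_one_add_smul_companion_mul_mem_span_iff (a b c : R) :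
    (a • 1 + b • !![0, c; 1, 0]) * !![1, 0; 0, -1] ∈ Submodule.span R {1, !![0, c; 1, 0]} ↔
      2 * a = 0 ∧ 2 * (b * c) = 0 := by
  rw [smul_one_add_smul_companion_mul_eq, mem_span_one_companion_iff]
  simp only [Matrix.of_apply, Matrix.cons_val', Matrix.cons_val_zero, Matrix.cons_val_one,
    Matrix.empty_val', Matrix.cons_val_fin_one]
  constructor
  · rintro ⟨h0011, h0110⟩
    exact ⟨by linear_combination h0011, by linear_combination -h0110⟩
  · rintro ⟨ha, hbc⟩
    exact ⟨by linear_combination ha, by linear_combination -hbc⟩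

end CompanionMatrix

theorem stmt7_general (k : ℕ) (d : ℤ)
    (hdmod : d % 4 = 1 ∨ d % 4 = 2)
    (v : ℕ) (hv : v = padicValInt 2 (4 * d))
    (S T : Matrix (Fin 2) (Fin 2) (ZMod (2 ^ k)))
    (hS : S = !![0, ((-d : ℤ) : ZMod (2 ^ k)); 1, 0])
    (hT : T = !![1, 0; 0, -1])
    (a b : ℤ) :
    (((a : ZMod (2 ^ k)) • (1 : Matrix (Fin 2) (Fin 2) (ZMod (2 ^ k)))
        + (b : ZMod (2 ^ k)) • S) * T ∈
      Submodule.span (ZMod (2 ^ k)) {(1 : Matrix (Fin 2) (Fin 2) (ZMod (2 ^ k))), S})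
    ↔ ((2 : ℤ) ^ (k - v / 2) ∣ a ∧ (2 : ℤ) ^ (k - (v + 1) / 2) ∣ b) := by
  subst hS hT
  have hd : d ≠ 0 := by omega
  have hval_d : padicValInt 2 d ≤ 1 := padicValInt_two_le_one_of_not_four_dvd (by omega)
  have hval_4d : v = padicValInt 2 d + 2 := by
    rw [hv, show 4 * d = 2 * (2 * d) by ring, padicValInt_two_mul (by omega),
      padicValInt_two_mul hd]
  have hcast_a : 2 * (a : ZMod (2 ^ k)) = ((2 * a : ℤ) : ZMod (2 ^ k)) := by push_cast; ring
  have hcast_b : 2 * ((b : ZMod (2 ^ k)) * ((-d : ℤ) : ZMod (2 ^ k))) =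
      -((2 * d * b : ℤ) : ZMod (2 ^ k)) := by push_cast; ring
  rw [smul_one_add_smul_companion_mul_mem_span_iff, hcast_a, hcast_b, neg_eq_zero,
    ZMod.intCast_mul_eq_zero_iff two_ne_zero, ZMod.intCast_mul_eq_zero_iff (by omega),
    padicValInt_two_mul hd, show padicValInt 2 2 = 1 from padicValInt.self one_lt_two,
    Nat.cast_ofNat, show v / 2 = 1 by omega, show (v + 1) / 2 = padicValInt 2 d + 1 by omega]

/-- In `M₂(ℤ/2^k)` with `S² = -d·I`, `τ² = I`, `τS = -Sτ` (concretely
`S = [[0,-d],[1,0]]`, `τ = [[1,0],[0,-1]]`), the element `(a + bS)τ` lies in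
`R[S]` iff `2^{k-⌊ord₂(4d)/2⌋} ∣ a` and `2^{k-⌈ord₂(4d)/2⌉} ∣ b`. -/
theorem stmt7 (k : ℕ) (d : ℤ) (hd : 0 < d) (hsf : Squarefree d)
    (hdmod : d % 4 = 1 ∨ d % 4 = 2)
    (v : ℕ) (hv : v = padicValInt 2 (4 * d))
    (S T : Matrix (Fin 2) (Fin 2) (ZMod (2 ^ k)))
    (hS : S = !![0, ((-d : ℤ) : ZMod (2 ^ k)); 1, 0])
    (hT : T = !![1, 0; 0, -1])
    (hS2 : S * S = ((-d : ℤ) : ZMod (2 ^ k)) • (1 : Matrix (Fin 2) (Fin 2) (ZMod (2 ^ k))))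
    (hT2 : T * T = 1) (hST : T * S + S * T = 0)
    (a b : ℤ) :
    (((a : ZMod (2 ^ k)) • (1 : Matrix (Fin 2) (Fin 2) (ZMod (2 ^ k)))
        + (b : ZMod (2 ^ k)) • S) * T ∈
      Submodule.span (ZMod (2 ^ k)) {(1 : Matrix (Fin 2) (Fin 2) (ZMod (2 ^ k))), S})
    ↔ ((2 : ℤ) ^ (k - v / 2) ∣ a ∧ (2 : ℤ) ^ (k - (v + 1) / 2) ∣ b) :=
  stmt7_general k d hdmod v hv S T hS hT a b
end
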